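/- arXiv:2305.16258 — 2 statements merged into one kernel-verified Lean document; each statement's English description precedes it below -/
import Mathlib

section
/- For every nonempty finite simple graph G, tc(G) is equal to the maximum of tc(H) over all nonempty induced subgraphs H of G that have no clique cutset, where tc is the tree clique cover number. -/
open SimpleGraph

namespace Paper

variable {V : Type*}

/-- `G` contains an induced subgraph isomorphic to `H`. -/
def ContainsInduced {W : Type*} (G : SimpleGraph V) (H : SimpleGraph W) : Prop :=
  ∃ S : Set V, Nonempty (G.induce S ≃g H)

/-- `G` is `H`-free: no induced subgraph of `G` is isomorphic to `H`. -/
def Free {W : Type*} (G : SimpleGraph V) (H : SimpleGraph W) : Prop :=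
  ¬ ContainsInduced G H

/-- The diamond: `K₄` minus an edge. -/
def diamond : SimpleGraph (Fin 4) :=
  (⊤ : SimpleGraph (Fin 4)).deleteEdges {s(0, 1)}

/-- `S` induces a hole (an induced cycle of length at least 4) in `G`. -/
def IsHoleSet (G : SimpleGraph V) (S : Set V) : Prop :=
  ∃ n : ℕ, 4 ≤ n ∧ Nonempty (G.induce S ≃g cycleGraph n)

/-- `G` contains an even hole. -/
def HasEvenHole (G : SimpleGraph V) : Prop :=
  ∃ S : Set V, ∃ n : ℕ, 4 ≤ n ∧ Even n ∧ Nonempty (G.induce S ≃g cycleGraph n)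

/-- The union of the vertex sets of two walks induces a hole in `G`. -/
def PairHole (G : SimpleGraph V) {a b c d : V} (P : G.Walk a b) (Q : G.Walk c d) : Prop :=
  IsHoleSet G {v | v ∈ P.support ∨ v ∈ Q.support}

/-- `G` contains a theta. -/
def HasTheta (G : SimpleGraph V) : Prop :=
  ∃ (a b : V) (P₁ P₂ P₃ : G.Walk a b),
    a ≠ b ∧ ¬ G.Adj a b ∧
    P₁.IsPath ∧ P₂.IsPath ∧ P₃.IsPath ∧
    PairHole G P₁ P₂ ∧ PairHole G P₁ P₃ ∧ PairHole G P₂ P₃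

/-- `G` contains a pyramid. -/
def HasPyramid (G : SimpleGraph V) : Prop :=
  ∃ (a b₁ b₂ b₃ : V) (P₁ : G.Walk a b₁) (P₂ : G.Walk a b₂) (P₃ : G.Walk a b₃),
    G.Adj b₁ b₂ ∧ G.Adj b₁ b₃ ∧ G.Adj b₂ b₃ ∧
    a ≠ b₁ ∧ a ≠ b₂ ∧ a ≠ b₃ ∧
    P₁.IsPath ∧ P₂.IsPath ∧ P₃.IsPath ∧
    PairHole G P₁ P₂ ∧ PairHole G P₁ P₃ ∧ PairHole G P₂ P₃

/-- `G` contains a prism. -/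
def HasPrism (G : SimpleGraph V) : Prop :=
  ∃ (a₁ a₂ a₃ b₁ b₂ b₃ : V) (P₁ : G.Walk a₁ b₁) (P₂ : G.Walk a₂ b₂) (P₃ : G.Walk a₃ b₃),
    G.Adj a₁ a₂ ∧ G.Adj a₁ a₃ ∧ G.Adj a₂ a₃ ∧
    G.Adj b₁ b₂ ∧ G.Adj b₁ b₃ ∧ G.Adj b₂ b₃ ∧
    ({a₁, a₂, a₃} : Set V) ∩ {b₁, b₂, b₃} = ∅ ∧
    P₁.IsPath ∧ P₂.IsPath ∧ P₃.IsPath ∧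
    PairHole G P₁ P₂ ∧ PairHole G P₁ P₃ ∧ PairHole G P₂ P₃

/-- The neighbors of `v` inside the set `S`. -/
def nbrsIn (G : SimpleGraph V) (S : Set V) (v : V) : Set V :=
  {u | u ∈ S ∧ G.Adj v u}

/-- `(S, v)` is a wheel of `G`: `S` is a hole and `v ∉ S` has at least 3 neighbors in `S`. -/
def IsWheel (G : SimpleGraph V) (S : Set V) (v : V) : Prop :=
  IsHoleSet G S ∧ v ∉ S ∧ 3 ≤ (nbrsIn G S v).ncard

/-- `(S, v)` is an even wheel of `G`. -/
def IsEvenWheel (G : SimpleGraph V) (S : Set V) (v : V) : Prop :=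
  IsWheel G S v ∧ Even (nbrsIn G S v).ncard

def HasWheel (G : SimpleGraph V) : Prop := ∃ (S : Set V) (v : V), IsWheel G S v

def HasEvenWheel (G : SimpleGraph V) : Prop := ∃ (S : Set V) (v : V), IsEvenWheel G S v

/-- A bug: a wheel whose hub has exactly three neighbors in the hole,
exactly two of which are adjacent. -/
def IsBug (G : SimpleGraph V) (S : Set V) (v : V) : Prop :=
  IsWheel G S v ∧ ∃ x y z : V, x ≠ y ∧ x ≠ z ∧ y ≠ z ∧
    nbrsIn G S v = {x, y, z} ∧ G.Adj x y ∧ ¬ G.Adj x z ∧ ¬ G.Adj y z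

/-- A twin wheel: the neighbors of the hub in the hole induce a path of length two. -/
def IsTwinWheel (G : SimpleGraph V) (S : Set V) (v : V) : Prop :=
  IsWheel G S v ∧ ∃ x y z : V, x ≠ y ∧ x ≠ z ∧ y ≠ z ∧
    nbrsIn G S v = {x, y, z} ∧ G.Adj x y ∧ G.Adj y z ∧ ¬ G.Adj x z

/-- A universal wheel: the hub is adjacent to every vertex of the hole. -/
def IsUniversalWheel (G : SimpleGraph V) (S : Set V) (v : V) : Prop :=
  IsWheel G S v ∧ ∀ u ∈ S, G.Adj v u

/-- `G` is a member of the class 𝒞 of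
(C4, diamond, theta, pyramid, prism, even wheel)-free graphs. -/
def InC (G : SimpleGraph V) : Prop :=
  Free G (cycleGraph 4) ∧ Free G diamond ∧ ¬ HasTheta G ∧ ¬ HasPyramid G ∧
    ¬ HasPrism G ∧ ¬ HasEvenWheel G

/-- The independence number of `G`. -/
noncomputable def indepNum (G : SimpleGraph V) : ℕ :=
  sSup {n | ∃ S : Set V, (S.Pairwise fun u v => ¬ G.Adj u v) ∧ S.ncard = n}

/-- The clique number of `G`. -/
noncomputable def cliqueNum (G : SimpleGraph V) : ℕ :=
  sSup {n | ∃ S : Set V, G.IsClique S ∧ S.ncard = n}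

/-- The (vertex) clique cover number of `G`: the minimum number of parts in a
partition of the vertex set of `G` into cliques. -/
noncomputable def cliqueCoverNum (G : SimpleGraph V) : ℕ :=
  sInf {n | ∃ F : Finset (Set V), F.card = n ∧ (∀ C ∈ F, G.IsClique C) ∧
    ∀ v : V, ∃! C : Set V, C ∈ F ∧ v ∈ C}

/-- A tree decomposition of `G`. -/
structure TreeDecomp (G : SimpleGraph V) where
  ι : Type
  tree : SimpleGraph ι
  tree_acyclic : tree.IsAcyclic
  tree_connected : tree.Connected
  bag : ι → Set V
  bag_cover : ∀ v : V, ∃ t, v ∈ bag t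
  bag_edge : ∀ ⦃u v : V⦄, G.Adj u v → ∃ t, u ∈ bag t ∧ v ∈ bag t
  bag_subtree : ∀ v : V, (tree.induce {t | v ∈ bag t}).Connected

/-- The treewidth of `G`: the minimum over tree decompositions of (max bag size − 1). -/
noncomputable def treewidth (G : SimpleGraph V) : ℕ :=
  sInf {k | ∃ D : TreeDecomp G, ∀ t, (D.bag t).ncard ≤ k + 1}

/-- The tree independence number of `G`. -/
noncomputable def treeIndepNum (G : SimpleGraph V) : ℕ :=
  sInf {k | ∃ D : TreeDecomp G, ∀ t, indepNum (G.induce (D.bag t)) ≤ k}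

/-- The tree clique cover number of `G`. -/
noncomputable def treeCliqueCoverNum (G : SimpleGraph V) : ℕ :=
  sInf {k | ∃ D : TreeDecomp G, ∀ t, cliqueCoverNum (G.induce (D.bag t)) ≤ k}

/-- A weight function on a finite graph: values in `[0,1]` summing to `1`. -/
def IsWeightFn [Fintype V] (w : V → ℝ) : Prop :=
  (∀ v, 0 ≤ w v ∧ w v ≤ 1) ∧ ∑ v, w v = 1

/-- The weight of a set of vertices. -/
noncomputable def wSet (w : V → ℝ) (S : Set V) : ℝ := ∑ᶠ x ∈ S, w x

/-- `X` is a `(w, c)`-balanced separator of `G`: every connected component of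
`G − X` has weight at most `c`. -/
def IsBalancedSep (G : SimpleGraph V) (w : V → ℝ) (c : ℝ) (X : Set V) : Prop :=
  ∀ D : (G.induce Xᶜ).ConnectedComponent, wSet w (Subtype.val '' D.supp) ≤ c

/-- `G` has a clique cutset: a clique `C` such that `G − C` is disconnected. -/
def HasCliqueCutset (G : SimpleGraph V) : Prop :=
  ∃ C : Set V, G.IsClique C ∧ ¬ (G.induce Cᶜ).Preconnected

/-- The closed neighborhood of `v`. -/
def closedNbhd (G : SimpleGraph V) (v : V) : Set V := insert v (G.neighborSet v)

/-- The (open) neighborhood of a set `S`: vertices outside `S` with a neighbor in `S`. -/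
def setNbhd (G : SimpleGraph V) (S : Set V) : Set V :=
  {v | v ∉ S ∧ ∃ u ∈ S, G.Adj v u}

/-- `(A, C, B)` is a separation of `G`. -/
def IsSeparation (G : SimpleGraph V) (A C B : Set V) : Prop :=
  A ∪ C ∪ B = Set.univ ∧ Disjoint A C ∧ Disjoint A B ∧ Disjoint C B ∧
    ∀ a ∈ A, ∀ b ∈ B, ¬ G.Adj a b

/-- `v` is a balanced vertex with respect to `w`: every connected component of
`G − N[v]` has weight at most `1/2`. -/
def IsBalancedVtx (G : SimpleGraph V) (w : V → ℝ) (v : V) : Prop :=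
  ∀ D : (G.induce (closedNbhd G v)ᶜ).ConnectedComponent,
    wSet w (Subtype.val '' D.supp) ≤ 1 / 2


section TreeLemmas
variable {ι : Type*} {T : SimpleGraph ι}

/-- A walk whose support lies in `S` lifts to a reachability in the induced graph. -/
lemma reachable_induce_of_walk {S : Set ι} :
    ∀ {u v : ι} (w : T.Walk u v), (∀ x ∈ w.support, x ∈ S) → ∀ (hu : u ∈ S) (hv : v ∈ S),
    (T.induce S).Reachable ⟨u, hu⟩ ⟨v, hv⟩ := by
  intro u v w
  induction w with
  | nil => intro _ hu hv; rfl
  | @cons a b c h p ih =>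
    intro hs ha hc
    have hb : b ∈ S := hs b (by simp [Walk.support_cons])
    have : (T.induce S).Adj ⟨a, ha⟩ ⟨b, hb⟩ := by
      simp [SimpleGraph.comap_adj, h]
    exact this.reachable.trans (ih (fun x hx => hs x (by simp [Walk.support_cons, hx])) hb hc)

/-- From reachability in the induced graph, get a walk in `T` with support inside `S`. -/
lemma walk_of_reachable_induce {S : Set ι} {u v : ↥S}
    (h : (T.induce S).Reachable u v) :
    ∃ w : T.Walk ↑u ↑v, ∀ x ∈ w.support, x ∈ S := by
  obtain ⟨w⟩ := h
  refine ⟨w.map (Embedding.induce S).toHom, ?_⟩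
  intro x hx
  replace hx : x ∈ (w.map (Embedding.induce S).toHom).support := hx
  rw [Walk.support_map] at hx
  obtain ⟨y, _, rfl⟩ := List.mem_map.mp hx
  exact y.2

/-- In an acyclic graph, any path between two vertices of a preconnected induced
subgraph stays inside it. -/
lemma path_support_subset (hac : T.IsAcyclic) {S : Set ι}
    (hS : (T.induce S).Preconnected) {x y : ι} (hx : x ∈ S) (hy : y ∈ S)
    {p : T.Walk x y} (hp : p.IsPath) : ∀ z ∈ p.support, z ∈ S := by
  classical
  obtain ⟨w, hw⟩ := walk_of_reachable_induce (T := T) (hS ⟨x, hx⟩ ⟨y, hy⟩)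
  have h2 : ∀ z ∈ (w.toPath : T.Walk x y).support, z ∈ S :=
    fun z hz => hw z (Walk.support_toPath_subset w hz)
  have := hac.path_unique ⟨p, hp⟩ w.toPath
  intro z hz
  exact h2 z (congrArg Subtype.val this ▸ hz)

/-- Between any two vertices of a connected induced subgraph there is a path
staying inside it. -/
lemma exists_path_in (hS : (T.induce S).Preconnected) {x y : ι} (hx : x ∈ S) (hy : y ∈ S) :
    ∃ p : T.Walk x y, p.IsPath ∧ ∀ z ∈ p.support, z ∈ S := by
  classical
  obtain ⟨w, hw⟩ := walk_of_reachable_induce (T := T) (hS ⟨x, hx⟩ ⟨y, hy⟩)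
  exact ⟨w.toPath, (w.toPath).2, fun z hz => hw z (Walk.support_toPath_subset w hz)⟩

/-- First vertex of a walk lying in a given set. -/
lemma exists_first_hit {u v : ι} (w : T.Walk u v) {S : Set ι} (hv : v ∈ S) :
    ∃ (x : ι) (w' : T.Walk u x), x ∈ S ∧ (∀ z ∈ w'.support, z ∈ S → z = x) ∧
      (∀ z ∈ w'.support, z ∈ w.support) := by
  classical
  induction w with
  | nil => exact ⟨_, Walk.nil, hv, by simp, by simp⟩
  | @cons a b c h p ih =>
    by_cases ha : a ∈ S
    · exact ⟨a, Walk.nil, ha, by simp, by simp⟩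
    · obtain ⟨x, w', hx, hmin, hsub⟩ := ih hv
      refine ⟨x, Walk.cons h w', hx, ?_, ?_⟩
      · intro z hz hzS
        rw [Walk.support_cons, List.mem_cons] at hz
        rcases hz with rfl | hz'
        · exact absurd hzS ha
        · exact hmin z hz' hzS
      · intro z hz
        rw [Walk.support_cons, List.mem_cons] at hz
        rcases hz with rfl | hz'
        · simp [Walk.support_cons]
        · rw [Walk.support_cons, List.mem_cons]
          exact Or.inr (hsub z hz')



/-- Three pairwise intersecting subtrees of an acyclic graph have a common vertex. -/
lemma three_helly (hac : T.IsAcyclic) {A B C : Set ι}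
    (hA : (T.induce A).Preconnected) (hB : (T.induce B).Preconnected)
    (hC : (T.induce C).Preconnected)
    (hAB : (A ∩ B).Nonempty) (hAC : (A ∩ C).Nonempty) (hBC : (B ∩ C).Nonempty) :
    (A ∩ B ∩ C).Nonempty := by
  classical
  obtain ⟨c, hcA, hcB⟩ := hAB
  obtain ⟨b, hbA, hbC⟩ := hAC
  obtain ⟨a, haB, haC⟩ := hBC
  -- path from a to b inside C
  obtain ⟨p, hp, hpC⟩ := exists_path_in hC haC hbC
  -- first vertex of p lying in A
  obtain ⟨x, w', hxA, hmin, hsub⟩ := exists_first_hit p (S := A) hbA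
  have hxC : x ∈ C := hpC x (hsub x w'.end_mem_support)
  -- path from x to c inside A
  obtain ⟨s, hs, hsA⟩ := exists_path_in hA hxA hcA
  -- F := path version of w'
  set F : T.Walk a x := w'.bypass with hF
  have hFpath : F.IsPath := w'.bypass_isPath
  have hFsub : ∀ z ∈ F.support, z ∈ w'.support := fun z hz => w'.support_bypass_subset hz
  -- F ++ s is a path
  have hkey : (F.append s).IsPath := by
    rw [Walk.isPath_def, Walk.support_append]
    refine List.Nodup.append (by rw [← Walk.isPath_def]; exact hFpath) ?_ ?_
    · exact ((Walk.isPath_def s).mp hs).tail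
    · intro z hzF hzs
      have hzA : z ∈ A := hsA z (List.mem_of_mem_tail hzs)
      have : z = x := hmin z (hFsub z hzF) hzA
      subst this
      have : s.support = z :: s.support.tail := (s.support_eq_cons)
      have hnd := (Walk.isPath_def s).mp hs
      rw [this] at hnd
      exact (List.nodup_cons.mp hnd).1 hzs
  -- the unique path from a to c lies in B
  obtain ⟨r, hr, hrB⟩ := exists_path_in hB haB hcB
  have := hac.path_unique ⟨F.append s, hkey⟩ ⟨r, hr⟩
  have hxB : x ∈ B := by
    have hxmem : x ∈ (F.append s).support := by
      rw [Walk.support_append]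
      exact List.mem_append_left _ F.end_mem_support
    have h2 : F.append s = r := congrArg Subtype.val this
    exact hrB x (h2 ▸ hxmem)
  exact ⟨x, ⟨hxA, hxB⟩, hxC⟩

/-- The intersection of two connected subtrees is connected. -/
lemma induce_inter_preconnected (hac : T.IsAcyclic) {A B : Set ι}
    (hA : (T.induce A).Preconnected) (hB : (T.induce B).Preconnected) :
    (T.induce (A ∩ B)).Preconnected := by
  rintro ⟨x, hxA, hxB⟩ ⟨y, hyA, hyB⟩
  obtain ⟨p, hp, hpA⟩ := exists_path_in hA hxA hyA
  have hpB := path_support_subset hac hB hxB hyB hp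
  exact reachable_induce_of_walk (S := A ∩ B) p (fun z hz => ⟨hpA z hz, hpB z hz⟩) _ _

/-- Helly property for finite families of subtrees. -/
lemma finset_helly (hac : T.IsAcyclic) {α : Type*} (F : Finset α) (f : α → Set ι)
    (hconn : ∀ a ∈ F, (T.induce (f a)).Preconnected)
    (hpair : ∀ a ∈ F, ∀ b ∈ F, (f a ∩ f b).Nonempty) (hne : F.Nonempty) :
    ∃ t, ∀ a ∈ F, t ∈ f a := by
  classical
  induction F using Finset.induction generalizing f with
  | empty => exact absurd hne (by simp)
  | @insert a F' ha ih =>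
    rcases Finset.eq_empty_or_nonempty F' with rfl | hF'
    · obtain ⟨t, ht, _⟩ := hpair a (by simp) a (by simp)
      exact ⟨t, by simpa using ht⟩
    · have hsa : a ∈ insert a F' := Finset.mem_insert_self a F'
      have hmem : ∀ b ∈ F', b ∈ insert a F' := fun b hb => Finset.mem_insert_of_mem hb
      have hgconn : ∀ b ∈ F', (T.induce (f b ∩ f a)).Preconnected := fun b hb =>
        induce_inter_preconnected hac (hconn b (hmem b hb)) (hconn a hsa)
      have hgpair : ∀ b ∈ F', ∀ b' ∈ F', ((f b ∩ f a) ∩ (f b' ∩ f a)).Nonempty := by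
        intro b hb b' hb'
        obtain ⟨t, ⟨h1, h2⟩, h3⟩ := three_helly hac (hconn b (hmem b hb))
          (hconn b' (hmem b' hb')) (hconn a hsa) (hpair b (hmem b hb) b' (hmem b' hb'))
          (hpair b (hmem b hb) a hsa) (hpair b' (hmem b' hb') a hsa)
        exact ⟨t, ⟨h1, h3⟩, ⟨h2, h3⟩⟩
      obtain ⟨t, ht⟩ := ih (fun b => f b ∩ f a) hgconn hgpair hF'
      refine ⟨t, ?_⟩
      intro b hb
      rcases Finset.mem_insert.mp hb with rfl | hb'
      · obtain ⟨b₀, hb₀⟩ := hF'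
        exact (ht b₀ hb₀).2
      · exact (ht b hb').1


end TreeLemmas

section CCN
variable {W W' : Type*} {H : SimpleGraph W} {H' : SimpleGraph W'}

lemma ccn_le {F : Finset (Set W)} (h1 : ∀ C ∈ F, H.IsClique C)
    (h2 : ∀ v : W, ∃! C : Set W, C ∈ F ∧ v ∈ C) : cliqueCoverNum H ≤ F.card :=
  Nat.sInf_le ⟨F, rfl, h1, h2⟩

lemma ccn_set_nonempty [Finite W] (H : SimpleGraph W) :
    {n | ∃ F : Finset (Set W), F.card = n ∧ (∀ C ∈ F, H.IsClique C) ∧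
      ∀ v : W, ∃! C : Set W, C ∈ F ∧ v ∈ C}.Nonempty := by
  classical
  have : Fintype W := Fintype.ofFinite W
  refine ⟨_, Finset.univ.image (fun w => ({w} : Set W)), rfl, ?_, ?_⟩
  · intro C hC
    obtain ⟨w, _, rfl⟩ := Finset.mem_image.mp hC
    simpa [SimpleGraph.isClique_iff] using Set.pairwise_singleton w H.Adj
  · intro v
    refine ⟨{v}, ⟨Finset.mem_image.mpr ⟨v, Finset.mem_univ v, rfl⟩, rfl⟩, ?_⟩
    rintro D ⟨hD, hvD⟩
    obtain ⟨w, _, rfl⟩ := Finset.mem_image.mp hD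
    rw [Set.mem_singleton_iff] at hvD
    subst hvD; rfl

lemma ccn_mem [Finite W] (H : SimpleGraph W) :
    ∃ F : Finset (Set W), F.card = cliqueCoverNum H ∧ (∀ C ∈ F, H.IsClique C) ∧
      ∀ v : W, ∃! C : Set W, C ∈ F ∧ v ∈ C :=
  Nat.sInf_mem (ccn_set_nonempty H)

/-- Clique cover number is monotone along graph embeddings (with finite target). -/
lemma ccn_le_embedding [Finite W] (f : H' ↪g H) : cliqueCoverNum H' ≤ cliqueCoverNum H := by
  classical
  obtain ⟨F, hcard, hcl, huniq⟩ := ccn_mem H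
  have hle : (F.image (fun C => (⇑f) ⁻¹' C)).card ≤ F.card := Finset.card_image_le
  refine le_trans (le_trans (ccn_le ?_ ?_) hle) (le_of_eq hcard)
  · intro C hC
    obtain ⟨D, hD, rfl⟩ := Finset.mem_image.mp hC
    intro u hu v hv hne
    exact f.map_rel_iff.mp ((hcl D hD) hu hv (fun h => hne (f.injective h)))
  · intro v
    obtain ⟨C, ⟨hC, hvC⟩, hCuniq⟩ := huniq (f v)
    refine ⟨(⇑f) ⁻¹' C, ⟨Finset.mem_image.mpr ⟨C, hC, rfl⟩, hvC⟩, ?_⟩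
    rintro D ⟨hD, hvD⟩
    obtain ⟨D₀, hD₀, rfl⟩ := Finset.mem_image.mp hD
    rw [hCuniq D₀ ⟨hD₀, hvD⟩]

lemma ccn_eq_of_iso [Finite W] [Finite W'] (e : H ≃g H') :
    cliqueCoverNum H = cliqueCoverNum H' :=
  le_antisymm (ccn_le_embedding e.toEmbedding) (ccn_le_embedding e.symm.toEmbedding)

end CCN

section TC
variable {W W' : Type*} {H : SimpleGraph W} {H' : SimpleGraph W'}

lemma connected_of_subsingleton {α : Type} [Subsingleton α] [Nonempty α]
    (G : SimpleGraph α) : G.Connected := by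
  rw [connected_iff]
  exact ⟨fun u v => by rw [Subsingleton.elim u v], ‹_›⟩

lemma bot_isAcyclic (α : Type) : (⊥ : SimpleGraph α).IsAcyclic := by
  intro v c hc
  cases c with
  | nil => exact hc.ne_nil rfl
  | cons h p => exact h

/-- The trivial tree decomposition with a single bag. -/
noncomputable def trivialDecomp (H : SimpleGraph W) : TreeDecomp H where
  ι := Unit
  tree := ⊥
  tree_acyclic := bot_isAcyclic Unit
  tree_connected := connected_of_subsingleton ⊥
  bag := fun _ => Set.univ
  bag_cover := fun v => ⟨(), trivial⟩
  bag_edge := fun u v _ => ⟨(), trivial, trivial⟩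
  bag_subtree := fun v => by
    have : Nonempty ↥{t : Unit | v ∈ Set.univ} := ⟨⟨(), trivial⟩⟩
    exact connected_of_subsingleton _

lemma tc_le {k : ℕ} (D : TreeDecomp H) (h : ∀ t, cliqueCoverNum (H.induce (D.bag t)) ≤ k) :
    treeCliqueCoverNum H ≤ k :=
  Nat.sInf_le ⟨D, h⟩

lemma tc_mem (H : SimpleGraph W) :
    ∃ D : TreeDecomp H, ∀ t, cliqueCoverNum (H.induce (D.bag t)) ≤ treeCliqueCoverNum H := by
  have h : {k | ∃ D : TreeDecomp H, ∀ t, cliqueCoverNum (H.induce (D.bag t)) ≤ k}.Nonempty :=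
    ⟨cliqueCoverNum (H.induce Set.univ), trivialDecomp H, fun _ => le_refl _⟩
  exact Nat.sInf_mem h

/-- Pull back an induced subgraph along an isomorphism. -/
def embPullback (e : H ≃g H') (B : Set W) : H'.induce (⇑e '' B) ↪g H.induce B where
  toFun y := ⟨e.symm ↑y, by obtain ⟨x, hx, hex⟩ := y.2; rw [← hex]; simpa using hx⟩
  inj' a b hab := by
    rw [Subtype.mk.injEq] at hab
    exact Subtype.ext (e.symm.injective hab)
  map_rel_iff' := @fun a b => e.symm.map_rel_iff

/-- Restriction embedding between iterated induced subgraphs. -/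
def embRestrict (H : SimpleGraph W) (S : Set W) (B : Set W) :
    (H.induce S).induce {x : ↥S | ↑x ∈ B} ↪g H.induce B where
  toFun y := ⟨((y : ↥S) : W), y.2⟩
  inj' a b hab := by
    rw [Subtype.mk.injEq] at hab
    exact Subtype.ext (Subtype.ext hab)
  map_rel_iff' := @fun a b => Iff.rfl

/-- tree clique cover number is monotone under isomorphisms. -/
lemma tc_le_of_iso [Finite W] [Finite W'] (e : H ≃g H') :
    treeCliqueCoverNum H' ≤ treeCliqueCoverNum H := by
  obtain ⟨D, hD⟩ := tc_mem H
  refine tc_le ⟨D.ι, D.tree, D.tree_acyclic, D.tree_connected, fun t => ⇑e '' D.bag t,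
    ?_, ?_, ?_⟩ ?_
  · intro v
    obtain ⟨t, ht⟩ := D.bag_cover (e.symm v)
    exact ⟨t, ⟨e.symm v, ht, e.apply_symm_apply v⟩⟩
  · intro u v huv
    have : H.Adj (e.symm u) (e.symm v) := by
      rw [← e.symm.map_rel_iff] at huv; exact huv
    obtain ⟨t, h1, h2⟩ := D.bag_edge this
    exact ⟨t, ⟨_, h1, e.apply_symm_apply u⟩, ⟨_, h2, e.apply_symm_apply v⟩⟩
  · intro v
    have hset : {t | v ∈ ⇑e '' D.bag t} = {t | e.symm v ∈ D.bag t} := by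
      ext t
      simp only [Set.mem_setOf_eq, Set.mem_image]
      constructor
      · rintro ⟨x, hx, rfl⟩; simpa using hx
      · intro hx; exact ⟨e.symm v, hx, e.apply_symm_apply v⟩
    rw [hset]
    exact D.bag_subtree (e.symm v)
  · intro t
    exact le_trans (ccn_le_embedding (embPullback e (D.bag t))) (hD t)

/-- tree clique cover number is monotone under induced subgraphs. -/
lemma tc_induce_le [Finite W] (H : SimpleGraph W) (S : Set W) :
    treeCliqueCoverNum (H.induce S) ≤ treeCliqueCoverNum H := by
  obtain ⟨D, hD⟩ := tc_mem H
  refine tc_le ⟨D.ι, D.tree, D.tree_acyclic, D.tree_connected,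
    fun t => {x : ↥S | ↑x ∈ D.bag t}, ?_, ?_, ?_⟩ ?_
  · intro v; exact D.bag_cover ↑v
  · intro u v huv; exact D.bag_edge huv
  · intro v; exact D.bag_subtree ↑v
  · intro t
    exact le_trans (ccn_le_embedding (embRestrict H S (D.bag t))) (hD t)

end TC

section Conn
variable {α β : Type*} {G : SimpleGraph α} {H : SimpleGraph β}

lemma connected_of_iso (e : G ≃g H) (h : G.Connected) : H.Connected := by
  rw [connected_iff]
  refine ⟨fun u v => ?_, ⟨e (Classical.choice h.nonempty)⟩⟩
  have := (h.preconnected (e.symm u) (e.symm v)).map e.toHom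
  simpa using this

/-- A union of two connected induced subgraphs joined by an edge is connected. -/
lemma induce_union_connected {P Q : Set α}
    (hP : (G.induce P).Connected) (hQ : (G.induce Q).Connected)
    {p q : α} (hp : p ∈ P) (hq : q ∈ Q) (hadj : G.Adj p q) :
    (G.induce (P ∪ Q)).Connected := by
  rw [connected_iff]
  refine ⟨?_, ⟨⟨p, Or.inl hp⟩⟩⟩
  have key : ∀ z : ↥(P ∪ Q), (G.induce (P ∪ Q)).Reachable z ⟨p, Or.inl hp⟩ := by
    rintro ⟨z, hz | hz⟩
    · obtain ⟨w, hw⟩ := walk_of_reachable_induce (hP.preconnected ⟨z, hz⟩ ⟨p, hp⟩)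
      exact reachable_induce_of_walk (S := P ∪ Q) w (fun x hx => Or.inl (hw x hx)) _ _
    · obtain ⟨w, hw⟩ := walk_of_reachable_induce (hQ.preconnected ⟨z, hz⟩ ⟨q, hq⟩)
      have h1 : (G.induce (P ∪ Q)).Reachable ⟨z, Or.inr hz⟩ ⟨q, Or.inr hq⟩ :=
        reachable_induce_of_walk (S := P ∪ Q) w (fun x hx => Or.inr (hw x hx)) _ _
      refine h1.trans (Adj.reachable ?_)
      exact hadj.symm
  intro u v
  exact (key u).trans (key v).symm

/-- Transfer connectivity along an injective map that reflects adjacency. -/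
noncomputable def induceImageIso (f : α → β) (hf : Function.Injective f)
    (hrel : ∀ a b : α, H.Adj (f a) (f b) ↔ G.Adj a b) (A : Set α) :
    G.induce A ≃g H.induce (f '' A) where
  toEquiv := Equiv.Set.image f A hf
  map_rel_iff' := @fun a b => by
    simp only [Equiv.Set.image_apply, comap_adj, Function.Embedding.coe_subtype]
    exact hrel ↑a ↑b

end Conn

section Glue
variable {ι₁ ι₂ : Type*} (T₁ : SimpleGraph ι₁) (T₂ : SimpleGraph ι₂) (r₁ : ι₁) (r₂ : ι₂)

/-- Glue two trees by adding an edge between `r₁` and `r₂`. -/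
def glueTree : SimpleGraph (ι₁ ⊕ ι₂) where
  Adj x y := match x, y with
    | .inl a, .inl b => T₁.Adj a b
    | .inr a, .inr b => T₂.Adj a b
    | .inl a, .inr b => a = r₁ ∧ b = r₂
    | .inr a, .inl b => a = r₂ ∧ b = r₁
  symm := by
    constructor
    rintro (a | a) (b | b) h
    · exact T₁.adj_symm h
    · exact ⟨h.2, h.1⟩
    · exact ⟨h.2, h.1⟩
    · exact T₂.adj_symm h
  loopless := by
    constructor
    rintro (a | a) h
    · exact T₁.irrefl h
    · exact T₂.irrefl h

variable {T₁ T₂ r₁ r₂}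

@[simp] lemma glue_adj_inl_inl {a b : ι₁} :
    (glueTree T₁ T₂ r₁ r₂).Adj (Sum.inl a) (Sum.inl b) ↔ T₁.Adj a b := Iff.rfl
@[simp] lemma glue_adj_inr_inr {a b : ι₂} :
    (glueTree T₁ T₂ r₁ r₂).Adj (Sum.inr a) (Sum.inr b) ↔ T₂.Adj a b := Iff.rfl
@[simp] lemma glue_adj_inl_inr {a : ι₁} {b : ι₂} :
    (glueTree T₁ T₂ r₁ r₂).Adj (Sum.inl a) (Sum.inr b) ↔ a = r₁ ∧ b = r₂ := Iff.rfl
@[simp] lemma glue_adj_inr_inl {a : ι₂} {b : ι₁} :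
    (glueTree T₁ T₂ r₁ r₂).Adj (Sum.inr a) (Sum.inl b) ↔ a = r₂ ∧ b = r₁ := Iff.rfl

/-- The homomorphism from the left tree into the glued tree. -/
def glueHomL : T₁ →g glueTree T₁ T₂ r₁ r₂ := ⟨Sum.inl, fun h => h⟩
/-- The homomorphism from the right tree into the glued tree. -/
def glueHomR : T₂ →g glueTree T₁ T₂ r₁ r₂ := ⟨Sum.inr, fun h => h⟩

lemma glue_cross_eq {x y : ι₁ ⊕ ι₂} (h : (glueTree T₁ T₂ r₁ r₂).Adj x y)
    (hxy : x.isLeft ≠ y.isLeft) :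
    s(x, y) = s(Sum.inl r₁, Sum.inr r₂) := by
  rcases x with a | a <;> rcases y with b | b
  · simp at hxy
  · obtain ⟨rfl, rfl⟩ := h; rfl
  · obtain ⟨rfl, rfl⟩ := h; exact Sym2.eq_swap
  · simp at hxy

lemma glue_same_side {x y : ι₁ ⊕ ι₂} (h : (glueTree T₁ T₂ r₁ r₂).Adj x y)
    (hxy : x.isLeft = y.isLeft) :
    s(x, y) ≠ s(Sum.inl r₁, Sum.inr r₂) := by
  intro heq
  rw [Sym2.eq_iff] at heq
  rcases heq with ⟨rfl, rfl⟩ | ⟨rfl, rfl⟩ <;> simp at hxy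

open Classical in
lemma glue_count_parity {u v : ι₁ ⊕ ι₂} (w : (glueTree T₁ T₂ r₁ r₂).Walk u v) :
    (w.edges.count s(Sum.inl r₁, Sum.inr r₂)) % 2 = if u.isLeft = v.isLeft then 0 else 1 := by
  induction w with
  | nil => simp
  | @cons a b c h p ih =>
    rw [Walk.edges_cons, List.count_cons]
    by_cases hab : a.isLeft = b.isLeft
    · simp only [beq_iff_eq, if_neg (glue_same_side h hab), add_zero, ih]
      by_cases hbc : b.isLeft = c.isLeft
      · rw [if_pos hbc, if_pos (hab.trans hbc)]
      · rw [if_neg hbc, if_neg (fun hac => hbc (hab.symm.trans hac))]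
    · simp only [beq_iff_eq, if_pos (glue_cross_eq h hab)]
      by_cases hbc : b.isLeft = c.isLeft
      · have h2 := ih
        rw [if_pos hbc] at h2
        rw [if_neg (fun hac : a.isLeft = c.isLeft => hab (hac.trans hbc.symm))]
        omega
      · have hac : a.isLeft = c.isLeft := by
          cases ha : a.isLeft <;> cases hb : b.isLeft <;> cases hc2 : c.isLeft <;> simp_all
        have h2 := ih
        rw [if_neg hbc] at h2
        rw [if_pos hac]
        omega

open Classical in
lemma glue_side_const {u v : ι₁ ⊕ ι₂} (w : (glueTree T₁ T₂ r₁ r₂).Walk u v)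
    (h : w.edges.count s(Sum.inl r₁, Sum.inr r₂) = 0) :
    ∀ x ∈ w.support, x.isLeft = u.isLeft := by
  induction w with
  | nil => intro x hx; rw [Walk.support_nil, List.mem_singleton] at hx; rw [hx]
  | @cons a b c hadj p ih =>
    rw [Walk.edges_cons, List.count_cons] at h
    have h0 : p.edges.count s(Sum.inl r₁, Sum.inr r₂) = 0 := by omega
    have hab : a.isLeft = b.isLeft := by
      by_contra hne
      rw [if_pos (by simp [glue_cross_eq hadj hne])] at h
      omega
    intro x hx
    rw [Walk.support_cons, List.mem_cons] at hx
    rcases hx with rfl | hx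
    · rfl
    · rw [ih h0 x hx, hab]

lemma glue_lift_left {u v : ι₁ ⊕ ι₂} (w : (glueTree T₁ T₂ r₁ r₂).Walk u v)
    (h : ∀ x ∈ w.support, x.isLeft = true) :
    ∀ (a b : ι₁) (hu : u = Sum.inl a) (hv : v = Sum.inl b),
      ∃ w' : T₁.Walk a b, w'.map (glueHomL (T₂ := T₂) (r₁ := r₁) (r₂ := r₂)) = w.copy hu hv := by
  induction w with
  | nil =>
    rintro a b rfl hv
    obtain rfl := Sum.inl.inj hv
    exact ⟨Walk.nil, by simp [Walk.copy_rfl_rfl]; rfl⟩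
  | @cons x y z hadj p ih =>
    rintro a b rfl rfl
    rcases y with c | c
    · have hadj' : T₁.Adj a c := hadj
      obtain ⟨w', hw'⟩ := ih (fun t ht => h t (by rw [Walk.support_cons, List.mem_cons]; exact Or.inr ht)) c b rfl rfl
      rw [Walk.copy_rfl_rfl] at hw'
      refine ⟨Walk.cons hadj' w', ?_⟩
      rw [Walk.copy_rfl_rfl, Walk.map_cons]
      exact congrArg (Walk.cons _) hw'
    · exact absurd (h (Sum.inr c) (by rw [Walk.support_cons, List.mem_cons]; exact Or.inr p.start_mem_support)) (by simp)

lemma glue_lift_right {u v : ι₁ ⊕ ι₂} (w : (glueTree T₁ T₂ r₁ r₂).Walk u v)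
    (h : ∀ x ∈ w.support, x.isLeft = false) :
    ∀ (a b : ι₂) (hu : u = Sum.inr a) (hv : v = Sum.inr b),
      ∃ w' : T₂.Walk a b, w'.map (glueHomR (T₁ := T₁) (r₁ := r₁) (r₂ := r₂)) = w.copy hu hv := by
  induction w with
  | nil =>
    rintro a b rfl hv
    obtain rfl := Sum.inr.inj hv
    exact ⟨Walk.nil, by simp [Walk.copy_rfl_rfl]; rfl⟩
  | @cons x y z hadj p ih =>
    rintro a b rfl rfl
    rcases y with c | c
    · exact absurd (h (Sum.inl c) (by rw [Walk.support_cons, List.mem_cons]; exact Or.inr p.start_mem_support)) (by simp)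
    · have hadj' : T₂.Adj a c := hadj
      obtain ⟨w', hw'⟩ := ih (fun t ht => h t (by rw [Walk.support_cons, List.mem_cons]; exact Or.inr ht)) c b rfl rfl
      rw [Walk.copy_rfl_rfl] at hw'
      refine ⟨Walk.cons hadj' w', ?_⟩
      rw [Walk.copy_rfl_rfl, Walk.map_cons]
      exact congrArg (Walk.cons _) hw'

/-- The glued graph of two trees is acyclic. -/
lemma glue_isAcyclic (h1 : T₁.IsAcyclic) (h2 : T₂.IsAcyclic) :
    (glueTree T₁ T₂ r₁ r₂).IsAcyclic := by
  classical
  intro v c hc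
  have hcount : c.edges.count s(Sum.inl r₁, Sum.inr r₂) ≤ 1 :=
    List.nodup_iff_count_le_one.mp hc.edges_nodup _
  have hpar := glue_count_parity (r₁ := r₁) (r₂ := r₂) c
  rw [if_pos rfl] at hpar
  have hzero : c.edges.count s(Sum.inl r₁, Sum.inr r₂) = 0 := by omega
  have hside := glue_side_const c hzero
  rcases v with a | a
  · obtain ⟨w', hw'⟩ := glue_lift_left c (by simpa using hside) a a rfl rfl
    rw [Walk.copy_rfl_rfl] at hw'
    rw [← hw'] at hc
    exact h1 w' ((Walk.map_isCycle_iff_of_injective (f := glueHomL) Sum.inl_injective).mp hc)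
  · obtain ⟨w', hw'⟩ := glue_lift_right c (by simpa using hside) a a rfl rfl
    rw [Walk.copy_rfl_rfl] at hw'
    rw [← hw'] at hc
    exact h2 w' ((Walk.map_isCycle_iff_of_injective (f := glueHomR) Sum.inr_injective).mp hc)

/-- The glued graph of two connected graphs is connected. -/
lemma glue_connected (h1 : T₁.Connected) (h2 : T₂.Connected) :
    (glueTree T₁ T₂ r₁ r₂).Connected := by
  rw [connected_iff]
  refine ⟨?_, ⟨Sum.inl r₁⟩⟩
  have key : ∀ z : ι₁ ⊕ ι₂, (glueTree T₁ T₂ r₁ r₂).Reachable z (Sum.inl r₁) := by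
    rintro (a | a)
    · exact (h1.preconnected a r₁).map (glueHomL)
    · refine Reachable.trans ?_ (Adj.reachable (by simp : (glueTree T₁ T₂ r₁ r₂).Adj (Sum.inr r₂) (Sum.inl r₁)))
      exact (h2.preconnected a r₂).map (glueHomR)
  intro u v
  exact (key u).trans (key v).symm

end Glue


section Main
variable {W W' : Type*}

lemma isClique_image {G : SimpleGraph W} {G' : SimpleGraph W'} (e : G ≃g G') {C : Set W}
    (h : G.IsClique C) : G'.IsClique (⇑e '' C) := by
  rintro u ⟨a, ha, rfl⟩ v ⟨b, hb, rfl⟩ hne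
  exact e.map_rel_iff.mpr (h ha hb (fun hab => hne (by rw [hab])))

lemma hasCliqueCutset_map {G : SimpleGraph W} {G' : SimpleGraph W'} (e : G ≃g G')
    (h : HasCliqueCutset G) : HasCliqueCutset G' := by
  obtain ⟨C, hC, hnc⟩ := h
  refine ⟨⇑e '' C, isClique_image e hC, fun hpre => hnc ?_⟩
  have hcompl : (⇑e '' C)ᶜ = ⇑e '' Cᶜ := (Set.image_compl_eq e.toEquiv.bijective).symm
  rw [hcompl] at hpre
  have iso := induceImageIso (G := G) (H := G') (⇑e) e.toEquiv.injective
    (fun a b => e.map_rel_iff) Cᶜ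
  intro u v
  have h1 := (hpre (iso u) (iso v)).map iso.symm.toHom
  simpa using h1

lemma ccn_eq_zero_of_isEmpty [IsEmpty W] (H : SimpleGraph W) : cliqueCoverNum H = 0 :=
  Nat.le_zero.mp (le_trans (ccn_le (F := ∅) (by simp) (fun v => isEmptyElim v)) (by simp))

/-- Every clique is contained in some bag of every tree decomposition. -/
lemma clique_subset_bag [Finite W] {G : SimpleGraph W} (D : TreeDecomp G) {K : Set W}
    (hK : G.IsClique K) : ∃ t, K ⊆ D.bag t := by
  classical
  haveI : Fintype W := Fintype.ofFinite W
  rcases K.eq_empty_or_nonempty with rfl | hne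
  · obtain ⟨t⟩ := D.tree_connected.nonempty
    exact ⟨t, by simp⟩
  · obtain ⟨t, ht⟩ := finset_helly D.tree_acyclic K.toFinset (fun v => {s | v ∈ D.bag s})
      (fun v _ => (D.bag_subtree v).preconnected)
      (fun a ha b hb => by
        rcases eq_or_ne a b with rfl | hab
        · obtain ⟨t, ht⟩ := D.bag_cover a
          exact ⟨t, ht, ht⟩
        · obtain ⟨t, h1, h2⟩ := D.bag_edge (hK (Set.mem_toFinset.mp ha) (Set.mem_toFinset.mp hb) hab)
          exact ⟨t, h1, h2⟩)
      (by simpa using hne)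
    exact ⟨t, fun v hv => ht v (Set.mem_toFinset.mpr hv)⟩

lemma main_aux : ∀ (n : ℕ) (V : Type) [Fintype V] (G : SimpleGraph V), Nat.card V ≤ n →
    ∀ M : ℕ, (∀ S : Set V, S.Nonempty → ¬ HasCliqueCutset (G.induce S) →
      treeCliqueCoverNum (G.induce S) ≤ M) → treeCliqueCoverNum G ≤ M := by
  intro n
  induction n with
  | zero =>
    intro V _ G hcard M _
    haveI : IsEmpty V := by
      have h0 : Nat.card V = 0 := Nat.le_zero.mp hcard
      rw [Nat.card_eq_fintype_card] at h0
      exact Fintype.card_eq_zero_iff.mp h0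
    haveI : IsEmpty ↥(Set.univ : Set V) := ⟨fun x => isEmptyElim x.1⟩
    refine le_trans (tc_le (trivialDecomp G) (fun t => ?_)) (Nat.zero_le M)
    exact le_of_eq (ccn_eq_zero_of_isEmpty _)
  | succ n ih =>
    intro V _ G hcard M hM
    classical
    by_cases hcc : HasCliqueCutset G
    · -- G has a clique cutset
      obtain ⟨C, hCclique, hCsep⟩ := hcc
      rw [SimpleGraph.Preconnected] at hCsep
      push_neg at hCsep
      obtain ⟨x, y, hxy⟩ := hCsep
      set A : Set V := {v | ∃ h : v ∈ Cᶜ, (G.induce Cᶜ).Reachable x ⟨v, h⟩} with hA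
      set B : Set V := Cᶜ \ A with hB
      set S₁ : Set V := A ∪ C with hS₁
      set S₂ : Set V := B ∪ C with hS₂
      have hxA : ↑x ∈ A := ⟨x.2, Reachable.refl _⟩
      have hyB : ↑y ∈ B := by
        refine ⟨y.2, fun hyA => ?_⟩
        obtain ⟨h, hr⟩ := hyA
        exact hxy hr
      have htotal : ∀ v, v ∈ A ∨ v ∈ B ∨ v ∈ C := by
        intro v
        by_cases hvC : v ∈ C
        · exact Or.inr (Or.inr hvC)
        · by_cases hvA : v ∈ A
          · exact Or.inl hvA
          · exact Or.inr (Or.inl ⟨hvC, hvA⟩)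
      have hABadj : ∀ a ∈ A, ∀ b ∈ B, ¬ G.Adj a b := by
        rintro a ⟨ha, hra⟩ b ⟨hb, hnb⟩ hadj
        refine hnb ⟨hb, hra.trans (Adj.reachable ?_)⟩
        exact hadj
      have hcover : ∀ v, v ∈ S₁ ∨ v ∈ S₂ := by
        intro v
        rcases htotal v with h | h | h
        · exact Or.inl (Or.inl h)
        · exact Or.inr (Or.inl h)
        · exact Or.inl (Or.inr h)
      have hmemC : ∀ v, v ∈ S₁ → v ∈ S₂ → v ∈ C := by
        rintro v (h1 | h1) (h2 | h2)
        · exact absurd h1 h2.2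
        · exact h2
        · exact h1
        · exact h1
      have hedge : ∀ u v, G.Adj u v → (u ∈ S₁ ∧ v ∈ S₁) ∨ (u ∈ S₂ ∧ v ∈ S₂) := by
        intro u v huv
        rcases htotal u with hu | hu | hu
        · refine Or.inl ⟨Or.inl hu, ?_⟩
          rcases htotal v with hv | hv | hv
          · exact Or.inl hv
          · exact absurd huv (hABadj u hu v hv)
          · exact Or.inr hv
        · refine Or.inr ⟨Or.inl hu, ?_⟩
          rcases htotal v with hv | hv | hv
          · exact absurd huv.symm (hABadj v hv u hu)
          · exact Or.inl hv
          · exact Or.inr hv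
        · rcases htotal v with hv | hv | hv
          · exact Or.inl ⟨Or.inr hu, Or.inl hv⟩
          · exact Or.inr ⟨Or.inr hu, Or.inl hv⟩
          · exact Or.inl ⟨Or.inr hu, Or.inr hv⟩
      have hyS1 : ↑y ∉ S₁ := by
        rintro (h | h)
        · exact hyB.2 h
        · exact y.2 h
      have hxS2 : ↑x ∉ S₂ := by
        rintro (h | h)
        · exact h.2 hxA
        · exact x.2 h
      haveI hf1 : Fintype ↥S₁ := Fintype.ofFinite _
      haveI hf2 : Fintype ↥S₂ := Fintype.ofFinite _
      have hcn : ∀ (S : Set V) (z : V), z ∉ S → Nat.card ↥S ≤ n := by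
        intro S z hz
        have hsub : S ⊂ Set.univ := ⟨Set.subset_univ _, fun h => hz (h (Set.mem_univ z))⟩
        have h1 := Set.ncard_lt_ncard hsub Set.finite_univ
        rw [Set.ncard_univ] at h1
        have h3 : Nat.card ↥S = S.ncard := Nat.card_coe_set_eq S
        omega
      have hc1 : Nat.card ↥S₁ ≤ n := hcn S₁ ↑y hyS1
      have hc2 : Nat.card ↥S₂ ≤ n := hcn S₂ ↑x hxS2
      -- transfer the hypothesis to induced subgraphs
      have hMind : ∀ (S : Set V) (S' : Set ↥S), S'.Nonempty →
          ¬ HasCliqueCutset ((G.induce S).induce S') →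
          treeCliqueCoverNum ((G.induce S).induce S') ≤ M := by
        intro S S' hne hncc
        have hiso := induceImageIso (G := G.induce S) (H := G)
          (Subtype.val) Subtype.val_injective (fun a b => Iff.rfl) S'
        have h1 : ¬ HasCliqueCutset (G.induce (Subtype.val '' S')) :=
          fun h => hncc (hasCliqueCutset_map hiso.symm h)
        have h2 := hM (Subtype.val '' S') (hne.image _) h1
        exact le_trans (tc_le_of_iso hiso.symm) h2
      have htc1 : treeCliqueCoverNum (G.induce S₁) ≤ M :=
        ih ↥S₁ (G.induce S₁) hc1 M (fun S' h1 h2 => hMind S₁ S' h1 h2)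
      have htc2 : treeCliqueCoverNum (G.induce S₂) ≤ M :=
        ih ↥S₂ (G.induce S₂) hc2 M (fun S' h1 h2 => hMind S₂ S' h1 h2)
      obtain ⟨D₁, hD₁⟩ := tc_mem (G.induce S₁)
      obtain ⟨D₂, hD₂⟩ := tc_mem (G.induce S₂)
      have hK₁ : (G.induce S₁).IsClique {v : ↥S₁ | ↑v ∈ C} := by
        intro u hu v hv hne
        exact hCclique hu hv (fun h => hne (Subtype.ext h))
      have hK₂ : (G.induce S₂).IsClique {v : ↥S₂ | ↑v ∈ C} := by
        intro u hu v hv hne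
        exact hCclique hu hv (fun h => hne (Subtype.ext h))
      obtain ⟨t₁, ht₁⟩ := clique_subset_bag D₁ hK₁
      obtain ⟨t₂, ht₂⟩ := clique_subset_bag D₂ hK₂
      refine tc_le (⟨D₁.ι ⊕ D₂.ι, glueTree D₁.tree D₂.tree t₁ t₂,
        glue_isAcyclic D₁.tree_acyclic D₂.tree_acyclic,
        glue_connected D₁.tree_connected D₂.tree_connected,
        Sum.elim (fun t => Subtype.val '' D₁.bag t) (fun t => Subtype.val '' D₂.bag t),
        ?_, ?_, ?_⟩) ?_
      · -- bag_cover
        intro v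
        rcases hcover v with h | h
        · obtain ⟨t, ht⟩ := D₁.bag_cover ⟨v, h⟩
          exact ⟨Sum.inl t, ⟨⟨v, h⟩, ht, rfl⟩⟩
        · obtain ⟨t, ht⟩ := D₂.bag_cover ⟨v, h⟩
          exact ⟨Sum.inr t, ⟨⟨v, h⟩, ht, rfl⟩⟩
      · -- bag_edge
        intro u v huv
        rcases hedge u v huv with ⟨h1, h2⟩ | ⟨h1, h2⟩
        · obtain ⟨t, ha, hb⟩ := D₁.bag_edge (show (G.induce S₁).Adj ⟨u, h1⟩ ⟨v, h2⟩ from huv)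
          exact ⟨Sum.inl t, ⟨_, ha, rfl⟩, ⟨_, hb, rfl⟩⟩
        · obtain ⟨t, ha, hb⟩ := D₂.bag_edge (show (G.induce S₂).Adj ⟨u, h1⟩ ⟨v, h2⟩ from huv)
          exact ⟨Sum.inr t, ⟨_, ha, rfl⟩, ⟨_, hb, rfl⟩⟩
      · -- bag_subtree
        intro v
        by_cases hv1 : v ∈ S₁ <;> by_cases hv2 : v ∈ S₂
        · -- v ∈ C
          have hvC : v ∈ C := hmemC v hv1 hv2
          have hNeq : {t | v ∈ Sum.elim (fun t => Subtype.val '' D₁.bag t)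
                (fun t => Subtype.val '' D₂.bag t) t} =
              Sum.inl '' {t | (⟨v, hv1⟩ : ↥S₁) ∈ D₁.bag t} ∪
              Sum.inr '' {t | (⟨v, hv2⟩ : ↥S₂) ∈ D₂.bag t} := by
            ext (t | t) <;>
              simp only [Set.mem_setOf_eq, Sum.elim_inl, Sum.elim_inr, Set.mem_union,
                Set.mem_image] <;> constructor
            · rintro ⟨u, hu, hval⟩
              exact Or.inl ⟨t, by rwa [show (⟨v, hv1⟩ : ↥S₁) = u from Subtype.ext hval.symm], rfl⟩
            · rintro (⟨s, hs, hst⟩ | ⟨s, hs, hst⟩)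
              · cases hst; exact ⟨_, hs, rfl⟩
              · cases hst
            · rintro ⟨u, hu, hval⟩
              exact Or.inr ⟨t, by rwa [show (⟨v, hv2⟩ : ↥S₂) = u from Subtype.ext hval.symm], rfl⟩
            · rintro (⟨s, hs, hst⟩ | ⟨s, hs, hst⟩)
              · cases hst
              · cases hst; exact ⟨_, hs, rfl⟩
          rw [hNeq]
          refine induce_union_connected ?_ ?_ (Set.mem_image_of_mem _ (ht₁ hvC))
            (Set.mem_image_of_mem _ (ht₂ hvC)) ⟨rfl, rfl⟩
          · exact connected_of_iso (induceImageIso Sum.inl Sum.inl_injective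
              (fun a b => Iff.rfl) _) (D₁.bag_subtree ⟨v, hv1⟩)
          · exact connected_of_iso (induceImageIso Sum.inr Sum.inr_injective
              (fun a b => Iff.rfl) _) (D₂.bag_subtree ⟨v, hv2⟩)
        · -- v only in S₁
          have hNeq : {t | v ∈ Sum.elim (fun t => Subtype.val '' D₁.bag t)
                (fun t => Subtype.val '' D₂.bag t) t} =
              Sum.inl '' {t | (⟨v, hv1⟩ : ↥S₁) ∈ D₁.bag t} := by
            ext (t | t) <;>
              simp only [Set.mem_setOf_eq, Sum.elim_inl, Sum.elim_inr, Set.mem_image] <;>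
              constructor
            · rintro ⟨u, hu, hval⟩
              exact ⟨t, by rwa [show (⟨v, hv1⟩ : ↥S₁) = u from Subtype.ext hval.symm], rfl⟩
            · rintro ⟨s, hs, hst⟩
              cases hst; exact ⟨_, hs, rfl⟩
            · rintro ⟨u, hu, hval⟩
              exact absurd (hval ▸ u.2) hv2
            · rintro ⟨s, hs, hst⟩
              cases hst
          rw [hNeq]
          exact connected_of_iso (induceImageIso Sum.inl Sum.inl_injective
            (fun a b => Iff.rfl) _) (D₁.bag_subtree ⟨v, hv1⟩)
        · -- v only in S₂
          have hNeq : {t | v ∈ Sum.elim (fun t => Subtype.val '' D₁.bag t)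
                (fun t => Subtype.val '' D₂.bag t) t} =
              Sum.inr '' {t | (⟨v, hv2⟩ : ↥S₂) ∈ D₂.bag t} := by
            ext (t | t) <;>
              simp only [Set.mem_setOf_eq, Sum.elim_inl, Sum.elim_inr, Set.mem_image] <;>
              constructor
            · rintro ⟨u, hu, hval⟩
              exact absurd (hval ▸ u.2) hv1
            · rintro ⟨s, hs, hst⟩
              cases hst
            · rintro ⟨u, hu, hval⟩
              exact ⟨t, by rwa [show (⟨v, hv2⟩ : ↥S₂) = u from Subtype.ext hval.symm], rfl⟩
            · rintro ⟨s, hs, hst⟩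
              cases hst; exact ⟨_, hs, rfl⟩
          rw [hNeq]
          exact connected_of_iso (induceImageIso Sum.inr Sum.inr_injective
            (fun a b => Iff.rfl) _) (D₂.bag_subtree ⟨v, hv2⟩)
        · rcases hcover v with h | h
          · exact absurd h hv1
          · exact absurd h hv2
      · -- widths
        rintro (t | t)
        · have hiso := induceImageIso (G := G.induce S₁) (H := G)
            (Subtype.val) Subtype.val_injective (fun a b => Iff.rfl) (D₁.bag t)
          exact le_trans (le_of_eq (ccn_eq_of_iso hiso).symm) (le_trans (hD₁ t) htc1)
        · have hiso := induceImageIso (G := G.induce S₂) (H := G)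
            (Subtype.val) Subtype.val_injective (fun a b => Iff.rfl) (D₂.bag t)
          exact le_trans (le_of_eq (ccn_eq_of_iso hiso).symm) (le_trans (hD₂ t) htc2)
    · -- no clique cutset
      rcases isEmpty_or_nonempty V with hV | hV
      · haveI : IsEmpty ↥(Set.univ : Set V) := ⟨fun x => isEmptyElim x.1⟩
        refine le_trans (tc_le (trivialDecomp G) (fun t => ?_)) (Nat.zero_le M)
        exact le_of_eq (ccn_eq_zero_of_isEmpty _)
      · have h1 : ¬ HasCliqueCutset (G.induce Set.univ) :=
          fun h => hcc (hasCliqueCutset_map (induceUnivIso G) h)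
        have h2 := hM Set.univ Set.univ_nonempty h1
        exact le_trans (tc_le_of_iso (induceUnivIso G)) h2

end Main

theorem statement7 {V : Type} [Fintype V] [Nonempty V] (G : SimpleGraph V) :
    treeCliqueCoverNum G =
      sSup {k | ∃ S : Set V, S.Nonempty ∧ ¬ HasCliqueCutset (G.induce S) ∧
        treeCliqueCoverNum (G.induce S) = k} := by
  classical
  have hbdd : BddAbove {k | ∃ S : Set V, S.Nonempty ∧ ¬ HasCliqueCutset (G.induce S) ∧
      treeCliqueCoverNum (G.induce S) = k} := by
    refine ⟨treeCliqueCoverNum G, ?_⟩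
    rintro k ⟨S, _, _, rfl⟩
    exact tc_induce_le G S
  obtain ⟨v⟩ := ‹Nonempty V›
  have hsing : ¬ HasCliqueCutset (G.induce ({v} : Set V)) := by
    rintro ⟨C, _, hnc⟩
    apply hnc
    intro a b
    have hab : a = b := by
      refine Subtype.ext (Subtype.ext ?_)
      have ha : (a.1 : V) ∈ ({v} : Set V) := a.1.2
      have hb : (b.1 : V) ∈ ({v} : Set V) := b.1.2
      rw [Set.mem_singleton_iff] at ha hb
      rw [ha, hb]
    rw [hab]
  have hne : {k | ∃ S : Set V, S.Nonempty ∧ ¬ HasCliqueCutset (G.induce S) ∧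
      treeCliqueCoverNum (G.induce S) = k}.Nonempty :=
    ⟨_, {v}, ⟨v, rfl⟩, hsing, rfl⟩
  apply le_antisymm
  · refine main_aux (Nat.card V) V G le_rfl _ (fun S hS hncc => ?_)
    exact le_csSup hbdd ⟨S, hS, hncc, rfl⟩
  · refine csSup_le hne ?_
    rintro k ⟨S, _, _, rfl⟩
    exact tc_induce_le G S

end Paper
end

section
/- Let G be a finite simple (C4, diamond)-free graph with no clique cutset, and let w be a weight function on G. Let U be the set of unbalanced vertices of G, and for each v ∈ U let (A_v, C_v, B_v) be the canonical star separation for v. Then the relation ≤_A on U defined by x ≤_A y if and only if x = y or y ∈ A_x is a partial order (reflexive, antisymmetric and transitive). -/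
open SimpleGraph

namespace Paper

variable {V : Type*}

/-!
If `y ∈ A_x`, then `B_x` is a connected set avoiding `N[y]`, so it lies in a single component
of `G − N[y]`; as `B_x` and `B_y` both carry more than half of the weight, they meet, hence
`B_x ⊆ B_y`. Transitivity follows at once. For antisymmetry, `B_x = B_y` puts `N(B_x)` inside the
common neighbourhood of `x` and `y`, which is a clique in a (C4, diamond)-free graph; but `N(B_x)`
separates `B_x` from `x`, so it would be a clique cutset.
-/

section Components

variable {G : SimpleGraph V}

def IsComponentOutside (G : SimpleGraph V) (v : V) (S : Set V) : Prop :=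
  ∃ D : (G.induce (closedNbhd G v)ᶜ).ConnectedComponent, S = Subtype.val '' D.supp

/-- The paper's `A_v`, for `S = B_v`. -/
def starSepA (G : SimpleGraph V) (v : V) (S : Set V) : Set V :=
  (S ∪ ({v} ∪ (G.neighborSet v ∩ setNbhd G S)))ᶜ

lemma disjoint_closedNbhd_iff {S : Set V} {y : V} :
    Disjoint S (closedNbhd G y) ↔ y ∉ S ∧ y ∉ setNbhd G S := by
  constructor
  · intro h
    refine ⟨fun hy => h.notMem_of_mem_left hy (Set.mem_insert y _), ?_⟩
    rintro ⟨-, s, hs, hys⟩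
    exact h.notMem_of_mem_left hs (Set.mem_insert_of_mem _ hys)
  · rintro ⟨hyS, hy⟩
    refine Set.disjoint_left.2 fun s hs hsN => ?_
    rcases hsN with rfl | hys
    exacts [hyS hs, hy ⟨hyS, s, hs, hys⟩]

lemma setNbhd_image_supp_subset {X : Set V} (D : (G.induce Xᶜ).ConnectedComponent) :
    setNbhd G (Subtype.val '' D.supp) ⊆ X := by
  rintro u ⟨huD, _, ⟨b, hb, rfl⟩, hub⟩
  by_contra huX
  refine huD ⟨⟨u, huX⟩, ?_, rfl⟩
  rw [ConnectedComponent.mem_supp_iff] at hb ⊢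
  exact hb ▸ ConnectedComponent.sound (Adj.reachable (G := G.induce Xᶜ) hub)

lemma preconnected_induce_image_supp {X : Set V} (D : (G.induce X).ConnectedComponent) :
    (G.induce (Subtype.val '' D.supp)).Preconnected := by
  let f : D.toSimpleGraph →g G.induce (Subtype.val '' D.supp) :=
    { toFun := fun u => ⟨u.1.1, u.1, u.2, rfl⟩
      map_rel' := id }
  refine D.connected_toSimpleGraph.preconnected.map f ?_
  rintro ⟨_, u, hu, rfl⟩
  exact ⟨⟨u, hu⟩, rfl⟩

lemma subset_image_supp_of_preconnected {Y T : Set V} (D : (G.induce Yᶜ).ConnectedComponent)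
    (hTY : T ⊆ Yᶜ) (hT : (G.induce T).Preconnected)
    (hmeet : (T ∩ Subtype.val '' D.supp).Nonempty) : T ⊆ Subtype.val '' D.supp := by
  obtain ⟨p, hpT, p', hp', rfl⟩ := hmeet
  intro t ht
  refine ⟨⟨t, hTY ht⟩, ?_, rfl⟩
  rw [ConnectedComponent.mem_supp_iff] at hp' ⊢
  exact hp' ▸ ConnectedComponent.sound ((hT ⟨t, ht⟩ ⟨_, hpT⟩).map (G.induceHomOfLE hTY).toHom)

namespace IsComponentOutside

variable {v : V} {S : Set V}

lemma setNbhd_subset (h : IsComponentOutside G v S) : setNbhd G S ⊆ G.neighborSet v := by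
  obtain ⟨D, rfl⟩ := h
  intro u hu
  rcases setNbhd_image_supp_subset D hu with rfl | huv
  · obtain ⟨_, _, ⟨b, _, rfl⟩, hub⟩ := hu
    exact absurd (Or.inr hub) b.2
  · exact huv

lemma mem_starSepA_iff (h : IsComponentOutside G v S) {y : V} :
    y ∈ starSepA G v S ↔ y ≠ v ∧ Disjoint S (closedNbhd G y) := by
  have hnbhd : y ∈ setNbhd G S → G.Adj v y := fun hy => h.setNbhd_subset hy
  rw [disjoint_closedNbhd_iff]
  simp only [starSepA, Set.mem_compl_iff, Set.mem_union, Set.mem_singleton_iff, Set.mem_inter_iff]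
  tauto

/-- `S` is connected and avoids `N[y]`, so it stays inside the component of `G − N[y]` it meets. -/
lemma subset_of_disjoint_closedNbhd {y : V} {T : Set V} (hS : IsComponentOutside G v S)
    (hT : IsComponentOutside G y T) (hdisj : Disjoint S (closedNbhd G y))
    (hmeet : (S ∩ T).Nonempty) : S ⊆ T := by
  obtain ⟨D, rfl⟩ := hS
  obtain ⟨D', rfl⟩ := hT
  exact subset_image_supp_of_preconnected D' hdisj.subset_compl_right
    (preconnected_induce_image_supp D) hmeet

/-- Without clique cutsets, `N(S)` cannot be a clique, since it separates `S` from `v`. -/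
lemma not_isClique_setNbhd (hG : ¬ HasCliqueCutset G) (h : IsComponentOutside G v S) :
    ¬ G.IsClique (setNbhd G S) := by
  intro hclique
  have hconn : (G.induce (setNbhd G S)ᶜ).Preconnected := by
    by_contra hconn
    exact hG ⟨_, hclique, hconn⟩
  have hvC : v ∉ setNbhd G S := fun hvN => G.irrefl (h.setNbhd_subset hvN)
  obtain ⟨D, rfl⟩ := h
  obtain ⟨b, hb⟩ := D.nonempty_supp
  have hbC : b.1 ∉ setNbhd G (Subtype.val '' D.supp) := fun hbN => hbN.1 ⟨b, hb, rfl⟩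
  obtain ⟨p⟩ := hconn ⟨b, hbC⟩ ⟨v, hvC⟩
  obtain ⟨d, -, hd₁, hd₂⟩ := p.exists_boundary_dart (Subtype.val ⁻¹' (Subtype.val '' D.supp))
    ⟨b, hb, rfl⟩ fun ⟨u, _, hu⟩ => u.2 (hu ▸ Or.inl rfl)
  exact d.snd.2 ⟨hd₂, _, hd₁, d.adj.symm⟩

end IsComponentOutside

end Components

section Weights

variable [Fintype V] {w : V → ℝ}

lemma wSet_le_one (hw : IsWeightFn w) (S : Set V) : wSet w S ≤ 1 := by
  classical
  rw [wSet, finsum_mem_eq_toFinset_sum, ← hw.2]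
  exact Finset.sum_le_sum_of_subset_of_nonneg (Finset.subset_univ _) fun v _ _ => (hw.1 v).1

lemma inter_nonempty_of_half_lt_wSet (hw : IsWeightFn w) {S T : Set V}
    (hS : 1 / 2 < wSet w S) (hT : 1 / 2 < wSet w T) : (S ∩ T).Nonempty := by
  by_contra h
  have hST := wSet_le_one hw (S ∪ T)
  rw [wSet, finsum_mem_union (Set.disjoint_iff_inter_eq_empty.2 (Set.not_nonempty_iff_eq_empty.1 h))
    S.toFinite T.toFinite] at hST
  rw [wSet] at hS hT
  linarith

end Weights

section Free

variable {G : SimpleGraph V}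

lemma containsInduced_of_adj_iff {W : Type*} {H : SimpleGraph W} (f : W → V)
    (hf : Function.Injective f) (hadj : ∀ i j, G.Adj (f i) (f j) ↔ H.Adj i j) :
    ContainsInduced G H := by
  obtain ⟨S, ⟨e⟩⟩ := isIndContained_iff_exists_iso_induce.1 (⟨⟨⟨f, hf⟩, hadj _ _⟩⟩ : H ⊴ G)
  exact ⟨S, ⟨e.symm⟩⟩

lemma isClique_commonNeighbors (hc4 : Free G (cycleGraph 4)) (hd : Free G diamond) {x y : V}
    (hxy : x ≠ y) : G.IsClique (G.commonNeighbors x y) := by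
  intro u hu v hv huv
  by_contra huv'
  rw [mem_commonNeighbors] at hu hv
  obtain ⟨hxu, hyu⟩ := hu
  obtain ⟨hxv, hyv⟩ := hv
  have := hxu.ne; have := hyu.ne; have := hxv.ne; have := hyv.ne
  by_cases hadj : G.Adj x y
  · refine hd (containsInduced_of_adj_iff ![u, v, x, y] ?_ ?_)
    · intro i j h
      fin_cases i <;> fin_cases j <;> simp_all [eq_comm]
    · intro i j
      fin_cases i <;> fin_cases j <;> simp_all [diamond, adj_comm]
  · refine hc4 (containsInduced_of_adj_iff ![x, u, y, v] ?_ ?_)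
    · intro i j h
      fin_cases i <;> fin_cases j <;> simp_all [eq_comm]
    · intro i j
      fin_cases i <;> fin_cases j <;> simp_all [cycleGraph_adj, adj_comm] <;> decide

end Free

theorem statement13_general {V : Type} [Fintype V] (G : SimpleGraph V)
    (hc4 : Free G (cycleGraph 4)) (hd : Free G diamond) (hnc : ¬ HasCliqueCutset G)
    (w : V → ℝ) (hw : IsWeightFn w)
    (U : Set V)
    (B A : V → Set V)
    (hB : ∀ v ∈ U, (∃ D : (G.induce (closedNbhd G v)ᶜ).ConnectedComponent,
      B v = Subtype.val '' D.supp) ∧ 1 / 2 < wSet w (B v))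
    (hA : ∀ v ∈ U, A v = (B v ∪ ({v} ∪ (G.neighborSet v ∩ setNbhd G (B v))))ᶜ) :
    (∀ x ∈ U, x = x ∨ x ∈ A x) ∧
    (∀ x ∈ U, ∀ y ∈ U, (x = y ∨ y ∈ A x) → (y = x ∨ x ∈ A y) → x = y) ∧
    (∀ x ∈ U, ∀ y ∈ U, ∀ z ∈ U,
      (x = y ∨ y ∈ A x) → (y = z ∨ z ∈ A y) → (x = z ∨ z ∈ A x)) := by
  have hcomp : ∀ x ∈ U, IsComponentOutside G x (B x) := fun x hx => (hB x hx).1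
  have hmemA : ∀ x ∈ U, ∀ y, y ∈ A x ↔ y ≠ x ∧ Disjoint (B x) (closedNbhd G y) :=
    fun x hx y => hA x hx ▸ (hcomp x hx).mem_starSepA_iff
  have hBsub : ∀ x ∈ U, ∀ y ∈ U, y ∈ A x → B x ⊆ B y := fun x hx y hy hyx =>
    (hcomp x hx).subset_of_disjoint_closedNbhd (hcomp y hy) ((hmemA x hx y).1 hyx).2
      (inter_nonempty_of_half_lt_wSet hw (hB x hx).2 (hB y hy).2)
  refine ⟨fun x _ => Or.inl rfl, ?_, ?_⟩
  · rintro x hx y hy (rfl | hyx) (hxy | hxy)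
    · rfl
    · rfl
    · exact hxy.symm
    have hBeq : B x = B y := (hBsub x hx y hy hyx).antisymm (hBsub y hy x hx hxy)
    have hclique := isClique_commonNeighbors hc4 hd ((hmemA x hx y).1 hyx).1.symm
    refine ((hcomp x hx).not_isClique_setNbhd hnc (hclique.subset fun u hu => ?_)).elim
    exact ⟨(hcomp x hx).setNbhd_subset hu, (hcomp y hy).setNbhd_subset (hBeq ▸ hu)⟩
  · rintro x hx y hy z hz (rfl | hyx) (rfl | hzy)
    · exact Or.inl rfl
    · exact Or.inr hzy
    · exact Or.inr hyx
    by_cases hxz : x = z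
    · exact Or.inl hxz
    refine Or.inr ((hmemA x hx z).2 ⟨Ne.symm hxz, ?_⟩)
    exact ((hmemA y hy z).1 hzy).2.mono_left (hBsub x hx y hy hyx)

theorem statement13 {V : Type} [Fintype V] (G : SimpleGraph V)
    (hc4 : Free G (cycleGraph 4)) (hd : Free G diamond) (hnc : ¬ HasCliqueCutset G)
    (w : V → ℝ) (hw : IsWeightFn w)
    (U : Set V) (hU : U = {v | ¬ IsBalancedVtx G w v})
    (B A : V → Set V)
    (hB : ∀ v ∈ U, (∃ D : (G.induce (closedNbhd G v)ᶜ).ConnectedComponent,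
      B v = Subtype.val '' D.supp) ∧ 1 / 2 < wSet w (B v))
    (hA : ∀ v ∈ U, A v = (B v ∪ ({v} ∪ (G.neighborSet v ∩ setNbhd G (B v))))ᶜ) :
    (∀ x ∈ U, x = x ∨ x ∈ A x) ∧
    (∀ x ∈ U, ∀ y ∈ U, (x = y ∨ y ∈ A x) → (y = x ∨ x ∈ A y) → x = y) ∧
    (∀ x ∈ U, ∀ y ∈ U, ∀ z ∈ U,
      (x = y ∨ y ∈ A x) → (y = z ∨ z ∈ A y) → (x = z ∨ z ∈ A x)) :=
  statement13_general G hc4 hd hnc w hw U B A hB hA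

end Paper
end
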